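/- Let s be a weak composition, T an s-decreasing tree, and (a,b), (c,d) tree ascents of T with a < c. Then the three sets A_T(a,b), A_T(c,d), and F_T(a,c) are pairwise disjoint. -/

import Mathlib

/-!
A rotation along `(a,b)` only raises the cardinalities `#(b,e)` with `e ∈ T^a∖0`: raising
exactly these by one in `inv T` already gives a transitive multi-inversion set containing
`inv T + (b,a)`, so it dominates the transitive closure. Its transitivity comes from that of
`inv T` and from the tree-ascent conditions, which give every vertex right of `a` and below `b`
a larger `b`-cardinality than `a`. The three disjointness claims then reduce to:
`T^a∖0` and `T^c∖0` are disjoint when `a < c < b` (condition (ii) for `(a,b)` against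
condition (iii) for `(c,d)`) or when `a ∈ T^c_0`; and `A_T(a,b)` lies in row `b ≠ d` when `b = c`.
-/

open scoped Classical

/-- An `s`-decreasing tree with internal vertices `1,…,n` (the root is `n`), encoded by
recording, for each non-root internal vertex `v`, its parent `parent v` (an internal vertex
with a larger label, so that labels decrease away from the root) and the index `idx v` of
the child slot of `parent v` (among `0,…,s (parent v)`, left to right) containing `v`.
Distinct internal vertices occupy distinct child slots; all remaining slots are leaves. -/
structure SDecTree (n : ℕ) (s : ℕ → ℕ) where
  parent : ℕ → ℕ
  idx : ℕ → ℕ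
  parent_gt : ∀ v, 1 ≤ v → v < n → v < parent v
  parent_le : ∀ v, 1 ≤ v → v < n → parent v ≤ n
  idx_le : ∀ v, 1 ≤ v → v < n → idx v ≤ s (parent v)
  slot_inj : ∀ v w, 1 ≤ v → v < n → 1 ≤ w → w < n →
      parent v = parent w → idx v = idx w → v = w
  parent_out : ∀ v, v = 0 ∨ n ≤ v → parent v = 0
  idx_out : ∀ v, v = 0 ∨ n ≤ v → idx v = 0

namespace SDecTree

variable {n : ℕ} {s : ℕ → ℕ}

/-- `y` is a weak ancestor of `x`, i.e. `x` is a labeled vertex of the subtree `T^y`. -/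
def Descend (T : SDecTree n s) (x y : ℕ) : Prop :=
  ∃ k, T.parent^[k] x = y ∧ ∀ m ≤ k, 1 ≤ T.parent^[m] x ∧ T.parent^[m] x ≤ n

/-- `x` is a labeled vertex of the subtree `T^y_j` rooted at the `j`-th child of `y`. -/
def InSub (T : SDecTree n s) (y j x : ℕ) : Prop :=
  ∃ c, T.Descend x c ∧ T.parent c = y ∧ T.idx c = j

/-- `x` lies strictly left of `y` in the planar tree `T`. -/
def LeftOf (T : SDecTree n s) (x y : ℕ) : Prop :=
  ∃ z j₁ j₂, j₁ < j₂ ∧ T.InSub z j₁ x ∧ T.InSub z j₂ y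

/-- The cardinality `#_T(y,x)` of the pair `(y,x)`: it is `j` if `x ∈ T^y_j`
(so `0` if `x ∈ T^y_0` and `s y` if `x ∈ T^y_{s y}`), `0` if `x` is left of `y`, and
`s y` if `x` is right of `y`; it is `0` for out-of-range pairs. -/
noncomputable def card (T : SDecTree n s) (y x : ℕ) : ℕ :=
  if h : ∃ j, T.InSub y j x then h.choose
  else if 1 ≤ x ∧ x < y ∧ y ≤ n ∧ ¬ T.LeftOf x y then s y else 0

/-- `x` is a labeled vertex of `T^a ∖ 0`, i.e. of `T^a` with `T^a_0` replaced by a leaf. -/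
def InSubMinus0 (T : SDecTree n s) (a x : ℕ) : Prop :=
  x = a ∨ ∃ j, 0 < j ∧ T.InSub a j x

/-- `(a,b)` is a tree ascent of `T`. -/
def TreeAscent (T : SDecTree n s) (a b : ℕ) : Prop :=
  1 ≤ a ∧ a < b ∧ b ≤ n ∧
  (∃ i, i < s b ∧ T.InSub b i a) ∧
  (∀ e j, a < e → e < b → T.InSub e j a → j = s e) ∧
  (0 < s a → ∀ x, ¬ T.InSub a (s a) x)

end SDecTree

/-- A multi-inversion set (encoded by its multiplicity function) is transitive:
if `a < b < c` then `#(b,a) = 0` or `#(c,a) ≥ #(c,b)`. -/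
def IsTransitiveInv (I : ℕ → ℕ → ℕ) : Prop :=
  ∀ a b c, a < b → b < c → I b a = 0 ∨ I c b ≤ I c a

/-- The transitive closure of a multi-inversion set: the smallest (by inclusion, i.e.
pointwise on multiplicities) transitive multi-inversion set containing it. -/
noncomputable def tcInv (I : ℕ → ℕ → ℕ) : ℕ → ℕ → ℕ := fun y x =>
  sInf {m | ∃ J : ℕ → ℕ → ℕ, IsTransitiveInv J ∧ (∀ y' x', I y' x' ≤ J y' x') ∧ J y x = m}

/-- Add one copy of the inversion `(b,a)` to `I`, capping the multiplicity at `s b`. -/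
def addInv (s : ℕ → ℕ) (I : ℕ → ℕ → ℕ) (b a : ℕ) : ℕ → ℕ → ℕ := fun y x =>
  if y = b ∧ x = a then min (I y x + 1) (s y) else I y x

namespace SDecTree

variable {n : ℕ} {s : ℕ → ℕ}

/-- The `s`-weak order: `T ⪯ Z` iff `#_T(y,x) ≤ #_Z(y,x)` for all pairs. -/
def wle (T Z : SDecTree n s) : Prop := ∀ y x, T.card y x ≤ Z.card y x

/-- Strict `s`-weak order. -/
def wlt (T Z : SDecTree n s) : Prop := wle T Z ∧ ¬ wle Z T

/-- Cover relation in the `s`-weak order. -/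
def wcov (T Z : SDecTree n s) : Prop := wlt T Z ∧ ∀ U, wlt T U → wlt U Z → False

/-- `W` is the join of `T` and `Z` in the `s`-weak order. -/
def IsJoin (T Z W : SDecTree n s) : Prop :=
  wle T W ∧ wle Z W ∧ ∀ U, wle T U → wle Z U → wle W U

/-- `Z` is the `s`-tree rotation of `T` along the tree ascent `(a,b)`, i.e.
`inv Z = (inv T + (b,a))^tc`. -/
def IsRotation (T Z : SDecTree n s) (a b : ℕ) : Prop :=
  T.TreeAscent a b ∧
  ∀ y x, 1 ≤ x → x < y → y ≤ n → Z.card y x = tcInv (addInv s T.card b a) y x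

/-- The set `A_T(a,b)` of inversions added by a rotation producing `Z`: the pairs `(f,e)`
with `#_Z(f,e) > #_T(f,e)`. -/
def Aset (T Z : SDecTree n s) : Set (ℕ × ℕ) :=
  {p | T.card p.1 p.2 < Z.card p.1 p.2}

/-- The set `A_T(a,b)` described directly via the transitive closure. -/
def ARot (T : SDecTree n s) (a b : ℕ) : Set (ℕ × ℕ) :=
  {p | T.card p.1 p.2 < tcInv (addInv s T.card b a) p.1 p.2}

/-- The set `F_T(a,c)` (here `b` and `d` are the partners of `a` and `c` in the
respective tree ascents `(a,b)` and `(c,d)`): it is `{(d,e) : e ∈ T^a∖0}` if `b = c`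
and `a ∈ T^c_0`, and empty otherwise. -/
def Fset (T : SDecTree n s) (a b c d : ℕ) : Set (ℕ × ℕ) :=
  {p | b = c ∧ T.InSub c 0 a ∧ p.1 = d ∧ T.InSubMinus0 a p.2}

/-- `T` is an `s`-Tamari tree: `#_T(c,a) ≤ #_T(c,b)` whenever `a < b < c`. -/
def IsTamari (T : SDecTree n s) : Prop :=
  ∀ a b c, a < b → b < c → T.card c a ≤ T.card c b

/-- `(a,b)` is a Tamari tree ascent of `T`: `a` is a non-rightmost child of `b`. -/
def TamariAscent (T : SDecTree n s) (a b : ℕ) : Prop :=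
  1 ≤ a ∧ a < n ∧ T.parent a = b ∧ T.card b a < s b

/-- `Z` is the `s`-Tamari rotation of `T` along the Tamari tree ascent `(a,b)`. -/
def IsTamRotation (T Z : SDecTree n s) (a b : ℕ) : Prop :=
  T.TamariAscent a b ∧
  ∀ y x, 1 ≤ x → x < y → y ≤ n → Z.card y x = tcInv (addInv s T.card b a) y x

/-- Cover relation in the `s`-Tamari lattice. -/
def tamcov (T Z : SDecTree n s) : Prop :=
  IsTamari T ∧ IsTamari Z ∧ wlt T Z ∧ ∀ U, IsTamari U → wlt T U → wlt U Z → False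

/-- `W` is the join of `T` and `Z` in the `s`-Tamari lattice. -/
def IsTamJoin (T Z W : SDecTree n s) : Prop :=
  IsTamari W ∧ wle T W ∧ wle Z W ∧ ∀ U, IsTamari U → wle T U → wle Z U → wle W U

/-- The open interval `(T,Z)` in the `s`-weak order. -/
def OpenInterval (T Z : SDecTree n s) : Set (SDecTree n s) := {U | wlt T U ∧ wlt U Z}

/-- A set of trees forming a chain in the `s`-weak order. -/
def IsChainSet (C : Set (SDecTree n s)) : Prop :=
  C.Pairwise fun U V => wlt U V ∨ wlt V U

/-- The geometric realization of the order complex `Δ(T,Z)` of the open interval `(T,Z)`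
in the `s`-weak order: the space of finitely supported probability vectors on the vertex
set whose support is a chain of the open interval. -/
def orderComplex (T Z : SDecTree n s) : Set (SDecTree n s → ℝ) :=
  {f | (∀ U, 0 ≤ f U) ∧ (Function.support f).Finite ∧
    Function.support f ⊆ OpenInterval T Z ∧ IsChainSet (Function.support f) ∧
    ∑ᶠ U, f U = 1}

/-- The geometric realization of the order complex of the open interval `(T,Z)` in the
`s`-Tamari lattice. -/
def tamOrderComplex (T Z : SDecTree n s) : Set (SDecTree n s → ℝ) :=
  {f | (∀ U, 0 ≤ f U) ∧ (Function.support f).Finite ∧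
    Function.support f ⊆ {U | IsTamari U ∧ wlt T U ∧ wlt U Z} ∧
    IsChainSet (Function.support f) ∧ ∑ᶠ U, f U = 1}

end SDecTree

/-- The list of labels of the consecutive cover relations along a saturated chain,
recorded as a list of poset elements. -/
def labelsOf {α : Type*} (lab : α → α → ℕ) (L : List α) : List ℕ :=
  (L.zip L.tail).map fun p => lab p.1 p.2

lemma tcInv_le {I J : ℕ → ℕ → ℕ} (hJ : IsTransitiveInv J) (hle : ∀ y x, I y x ≤ J y x)
    (y x : ℕ) : tcInv I y x ≤ J y x :=
  Nat.sInf_le ⟨J, hJ, hle, rfl⟩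

namespace SDecTree

variable {n : ℕ} {s : ℕ → ℕ} {T Z : SDecTree n s} {u v w x y z a b c d j : ℕ}

lemma bounds_of_parent_ne_zero (h : T.parent v ≠ 0) : 1 ≤ v ∧ v < n := by
  by_contra hv
  exact h (T.parent_out v (by omega))

lemma lt_parent (h : T.parent v ≠ 0) : v < T.parent v :=
  T.parent_gt v (bounds_of_parent_ne_zero h).1 (bounds_of_parent_ne_zero h).2

lemma parent_le_of_ne_zero (h : T.parent v ≠ 0) : T.parent v ≤ n :=
  T.parent_le v (bounds_of_parent_ne_zero h).1 (bounds_of_parent_ne_zero h).2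

lemma idx_le_s (v : ℕ) : T.idx v ≤ s (T.parent v) := by
  by_cases hv : v = 0 ∨ n ≤ v
  · simp [T.idx_out v hv]
  · exact T.idx_le v (by omega) (by omega)

lemma idx_eq_zero_of_parent_eq_zero (h : T.parent v = 0) : T.idx v = 0 := by
  by_cases hv : v = 0 ∨ n ≤ v
  · exact T.idx_out v hv
  · have := T.parent_gt v (by omega) (by omega)
    omega

lemma child_inj {c₁ c₂ : ℕ} (hp : T.parent c₁ = T.parent c₂) (hne : T.parent c₁ ≠ 0)
    (hi : T.idx c₁ = T.idx c₂) : c₁ = c₂ := by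
  obtain ⟨h₁, h₁'⟩ := bounds_of_parent_ne_zero hne
  obtain ⟨h₂, h₂'⟩ := bounds_of_parent_ne_zero (hp ▸ hne)
  exact T.slot_inj c₁ c₂ h₁ h₁' h₂ h₂' hp hi

lemma Descend.left_bounds (h : T.Descend x y) : 1 ≤ x ∧ x ≤ n := by
  obtain ⟨k, -, hb⟩ := h
  exact hb 0 k.zero_le

lemma Descend.right_bounds (h : T.Descend x y) : 1 ≤ y ∧ y ≤ n := by
  obtain ⟨k, rfl, hb⟩ := h
  exact hb k le_rfl

lemma descend_refl (h₁ : 1 ≤ x) (h₂ : x ≤ n) : T.Descend x x :=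
  ⟨0, rfl, fun m hm => by rw [Nat.le_zero.1 hm]; exact ⟨h₁, h₂⟩⟩

lemma descend_parent (h : T.parent v ≠ 0) : T.Descend v (T.parent v) := by
  refine ⟨1, rfl, fun m hm => ?_⟩
  obtain ⟨h₁, h₂⟩ := bounds_of_parent_ne_zero h
  interval_cases m
  · exact ⟨h₁, h₂.le⟩
  · rw [Function.iterate_one]
    exact ⟨by omega, parent_le_of_ne_zero h⟩

lemma descend_iterate {k m : ℕ} (hb : ∀ m ≤ k, 1 ≤ T.parent^[m] x ∧ T.parent^[m] x ≤ n)
    (hm : m ≤ k) : T.Descend (T.parent^[m] x) (T.parent^[k] x) := by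
  refine ⟨k - m, ?_, fun m' hm' => ?_⟩
  · rw [← Function.iterate_add_apply, Nat.sub_add_cancel hm]
  · rw [← Function.iterate_add_apply]
    exact hb _ (by omega)

lemma Descend.trans (h₁ : T.Descend x y) (h₂ : T.Descend y z) : T.Descend x z := by
  obtain ⟨k₁, rfl, hb₁⟩ := h₁
  obtain ⟨k₂, rfl, hb₂⟩ := h₂
  refine ⟨k₂ + k₁, Function.iterate_add_apply .., fun m hm => ?_⟩
  rcases le_total m k₁ with h | h
  · exact hb₁ m h
  · rw [← Nat.sub_add_cancel h, Function.iterate_add_apply]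
    exact hb₂ _ (by omega)

lemma Descend.le (h : T.Descend x y) : x ≤ y := by
  obtain ⟨k, rfl, hb⟩ := h
  induction k generalizing x with
  | zero => rfl
  | succ k ih =>
    have hp : T.parent x ≠ 0 := by
      have := (hb 1 le_add_self).1
      rw [Function.iterate_one] at this
      omega
    rw [Function.iterate_succ_apply]
    exact (lt_parent hp).le.trans
      (ih fun m hm => by rw [← Function.iterate_succ_apply]; exact hb (m + 1) (by omega))

lemma descend_total (h₁ : T.Descend x y) (h₂ : T.Descend x z) :
    T.Descend y z ∨ T.Descend z y := by
  obtain ⟨k₁, rfl, hb₁⟩ := h₁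
  obtain ⟨k₂, rfl, hb₂⟩ := h₂
  rcases le_total k₁ k₂ with h | h
  · exact Or.inl (descend_iterate hb₂ h)
  · exact Or.inr (descend_iterate hb₁ h)

lemma descend_step (h : T.Descend x y) (hne : x ≠ y) : T.Descend (T.parent x) y := by
  obtain ⟨_ | k, rfl, hb⟩ := h
  · exact absurd rfl hne
  · simpa using descend_iterate hb (m := 1) (by omega)

lemma descend_root {v : ℕ} (h₁ : 1 ≤ v) (h₂ : v ≤ n) : T.Descend v n := by
  obtain h | rfl := h₂.lt_or_eq
  · have hp := T.parent_gt v h₁ h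
    exact (descend_parent (by omega)).trans
      (descend_root (by omega) (T.parent_le v h₁ h))
  · exact descend_refl h₁ le_rfl
termination_by n - v

lemma Descend.eq_of_parent_eq {c₁ c₂ : ℕ} (h : T.Descend c₁ c₂)
    (hp : T.parent c₁ = T.parent c₂) : c₁ = c₂ := by
  by_contra hne
  have hd := descend_step h hne
  have h₁ : 1 ≤ T.parent c₂ := hp ▸ hd.left_bounds.1
  have h₂ := lt_parent (T := T) (v := c₂) (by omega)
  have h₃ := hd.le
  omega

lemma inSub_zero (h : T.InSub 0 j x) : j = 0 := by
  obtain ⟨c, -, hp, rfl⟩ := h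
  exact idx_eq_zero_of_parent_eq_zero hp

lemma InSub.one_le (h : T.InSub y j x) (hj : j ≠ 0) : 1 ≤ y := by
  by_contra hy
  exact hj (inSub_zero (Nat.lt_one_iff.1 (not_le.1 hy) ▸ h))

lemma InSub.descend (h : T.InSub y j x) (hy : 1 ≤ y) : T.Descend x y := by
  obtain ⟨c, hd, rfl, -⟩ := h
  exact hd.trans (descend_parent (by omega))

lemma InSub.left_bounds (h : T.InSub y j x) : 1 ≤ x ∧ x ≤ n := by
  obtain ⟨c, hd, -⟩ := h
  exact hd.left_bounds

lemma InSub.lt (h : T.InSub y j x) (hy : 1 ≤ y) : x < y := by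
  obtain ⟨c, hd, rfl, -⟩ := h
  exact hd.le.trans_lt (lt_parent (by omega))

lemma InSub.idx_le (h : T.InSub y j x) : j ≤ s y := by
  obtain ⟨c, -, rfl, rfl⟩ := h
  exact idx_le_s c

lemma InSub.of_descend (h : T.InSub y j x) (hd : T.Descend u x) : T.InSub y j u := by
  obtain ⟨c, hdc, hp, hi⟩ := h
  exact ⟨c, hd.trans hdc, hp, hi⟩

lemma inSub_unique {j₁ j₂ : ℕ} (h₁ : T.InSub y j₁ x) (h₂ : T.InSub y j₂ x) : j₁ = j₂ := by
  obtain ⟨c₁, hd₁, hp₁, rfl⟩ := h₁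
  obtain ⟨c₂, hd₂, hp₂, rfl⟩ := h₂
  rcases descend_total hd₁ hd₂ with h | h
  · rw [h.eq_of_parent_eq (hp₁.trans hp₂.symm)]
  · rw [h.eq_of_parent_eq (hp₂.trans hp₁.symm)]

lemma exists_inSub_of_descend (h : T.Descend x y) (hne : x ≠ y) : ∃ j, T.InSub y j x := by
  obtain ⟨_ | k, rfl, hb⟩ := h
  · exact absurd rfl hne
  · exact ⟨_, _, ⟨k, rfl, fun m hm => hb m (by omega)⟩,
      (Function.iterate_succ_apply' ..).symm, rfl⟩

lemma InSub.to_ancestor {z₁ z₂ : ℕ} (h : T.InSub z₂ j u) (h₁ : T.Descend u z₁)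
    (h₂ : T.Descend z₁ z₂) (hne : z₁ ≠ z₂) : T.InSub z₂ j z₁ := by
  obtain ⟨j', hj'⟩ := exists_inSub_of_descend h₂ hne
  rwa [inSub_unique h (hj'.of_descend h₁)]

lemma LeftOf.left_bounds (h : T.LeftOf x y) : 1 ≤ x ∧ x ≤ n := by
  obtain ⟨z, j₁, j₂, hj, hx, hy⟩ := h
  exact (hx.descend (hy.one_le (by omega))).left_bounds

lemma LeftOf.right_bounds (h : T.LeftOf x y) : 1 ≤ y ∧ y ≤ n := by
  obtain ⟨z, j₁, j₂, hj, hx, hy⟩ := h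
  exact (hy.descend (hy.one_le (by omega))).left_bounds

lemma Descend.not_leftOf (h : T.Descend x y) : ¬ T.LeftOf x y := by
  rintro ⟨z, j₁, j₂, hj, hx, hy⟩
  exact hj.ne (inSub_unique hx (hy.of_descend h))

lemma Descend.not_rightOf (h : T.Descend x y) : ¬ T.LeftOf y x := by
  rintro ⟨z, j₁, j₂, hj, hy, hx⟩
  exact hj.ne (inSub_unique (hy.of_descend h) hx)

lemma LeftOf.descendant_left (h : T.LeftOf x y) (hd : T.Descend u x) : T.LeftOf u y := by
  obtain ⟨z, j₁, j₂, hj, hx, hy⟩ := h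
  exact ⟨z, j₁, j₂, hj, hx.of_descend hd, hy⟩

lemma LeftOf.descendant_right (h : T.LeftOf x y) (hd : T.Descend u y) : T.LeftOf x u := by
  obtain ⟨z, j₁, j₂, hj, hx, hy⟩ := h
  exact ⟨z, j₁, j₂, hj, hx, hy.of_descend hd⟩

lemma LeftOf.ancestor_left (h : T.LeftOf x y) (hx : T.Descend x a) (hy : ¬ T.Descend y a) :
    T.LeftOf a y := by
  obtain ⟨z, j₁, j₂, hj, hxz, hyz⟩ := h
  have hz := hyz.one_le (by omega)
  rcases descend_total (hxz.descend hz) hx with hza | haz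
  · exact absurd ((hyz.descend hz).trans hza) hy
  · have hne : a ≠ z := by rintro rfl; exact hy (hyz.descend hz)
    exact ⟨z, j₁, j₂, hj, hxz.to_ancestor hx haz hne, hyz⟩

lemma LeftOf.ancestor_right (h : T.LeftOf x y) (hy : T.Descend y a) (hx : ¬ T.Descend x a) :
    T.LeftOf x a := by
  obtain ⟨z, j₁, j₂, hj, hxz, hyz⟩ := h
  have hz := hyz.one_le (by omega)
  rcases descend_total (hyz.descend hz) hy with hza | haz
  · exact absurd ((hxz.descend hz).trans hza) hx
  · have hne : a ≠ z := by rintro rfl; exact hx (hxz.descend hz)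
    exact ⟨z, j₁, j₂, hj, hxz, hyz.to_ancestor hy haz hne⟩

lemma leftOf_total (hu : 1 ≤ u ∧ u ≤ n) (hv : 1 ≤ v ∧ v ≤ n) (huv : ¬ T.Descend u v)
    (hvu : ¬ T.Descend v u) : T.LeftOf u v ∨ T.LeftOf v u := by
  have hS : ∃ z, T.Descend u z ∧ T.Descend v z :=
    ⟨n, descend_root hu.1 hu.2, descend_root hv.1 hv.2⟩
  obtain ⟨hdu, hdv⟩ := Nat.find_spec hS
  obtain ⟨_, c₁, hc₁, hp₁, rfl⟩ := exists_inSub_of_descend hdu fun h => hvu (h ▸ hdv)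
  obtain ⟨_, c₂, hc₂, hp₂, rfl⟩ := exists_inSub_of_descend hdv fun h => huv (h ▸ hdu)
  rcases lt_trichotomy (T.idx c₁) (T.idx c₂) with h | h | h
  · exact Or.inl ⟨_, _, _, h, ⟨c₁, hc₁, hp₁, rfl⟩, ⟨c₂, hc₂, hp₂, rfl⟩⟩
  · -- otherwise the common child `c₁ = c₂` would be a smaller common ancestor
    have hp : T.parent c₁ ≠ 0 := by have := hdu.right_bounds.1; omega
    have hc := child_inj (hp₁.trans hp₂.symm) hp h
    have := Nat.find_min' hS ⟨hc₁, hc ▸ hc₂⟩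
    have := lt_parent hp
    omega
  · exact Or.inr ⟨_, _, _, h, ⟨c₂, hc₂, hp₂, rfl⟩, ⟨c₁, hc₁, hp₁, rfl⟩⟩

lemma Descend.eq_of_separates {z₁ z₂ l₁ l₂ : ℕ} (hd : T.Descend z₁ z₂)
    (hx : T.Descend x z₁) (hy : T.Descend y z₁)
    (hx₂ : T.InSub z₂ l₁ x) (hy₂ : T.InSub z₂ l₂ y) (hl : l₁ ≠ l₂) : z₁ = z₂ := by
  by_contra hne
  exact hl (inSub_unique (hx₂.to_ancestor hx hd hne) (hy₂.to_ancestor hy hd hne))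

lemma leftOf_asymm (h₁ : T.LeftOf x y) (h₂ : T.LeftOf y x) : False := by
  obtain ⟨z₁, i₁, i₂, hi, hx₁, hy₁⟩ := h₁
  obtain ⟨z₂, l₁, l₂, hl, hy₂, hx₂⟩ := h₂
  have hz₁ := hy₁.one_le (by omega)
  have hz₂ := hx₂.one_le (by omega)
  have hz : z₁ = z₂ := by
    rcases descend_total (hx₁.descend hz₁) (hx₂.descend hz₂) with hd | hd
    · exact hd.eq_of_separates (hx₁.descend hz₁) (hy₁.descend hz₁) hx₂ hy₂ hl.ne'
    · exact (hd.eq_of_separates (hy₂.descend hz₂) (hx₂.descend hz₂) hy₁ hx₁ hi.ne').symm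
  subst hz
  have := inSub_unique hx₁ hx₂
  have := inSub_unique hy₁ hy₂
  omega

lemma leftOf_trans (h₁ : T.LeftOf x y) (h₂ : T.LeftOf y w) : T.LeftOf x w := by
  obtain ⟨z₁, i₁, i₂, hi, hx₁, hy₁⟩ := h₁
  obtain ⟨z₂, l₁, l₂, hl, hy₂, hw₂⟩ := h₂
  have hz₁ := hy₁.one_le (by omega)
  have hz₂ := hw₂.one_le (by omega)
  obtain rfl | hne := eq_or_ne z₁ z₂
  · obtain rfl := inSub_unique hy₁ hy₂
    exact ⟨z₁, i₁, l₂, hi.trans hl, hx₁, hw₂⟩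
  rcases descend_total (hy₁.descend hz₁) (hy₂.descend hz₂) with hd | hd
  · exact LeftOf.descendant_left
      ⟨z₂, l₁, l₂, hl, hy₂.to_ancestor (hy₁.descend hz₁) hd hne, hw₂⟩ (hx₁.descend hz₁)
  · exact LeftOf.descendant_right
      ⟨z₁, i₁, i₂, hi, hx₁, hy₁.to_ancestor (hy₂.descend hz₂) hd hne.symm⟩ (hw₂.descend hz₂)

lemma position_cases (hx : 1 ≤ x) (hxy : x < y) (hy : y ≤ n) :
    (∃ j, T.InSub y j x) ∨ T.LeftOf x y ∨ T.LeftOf y x := by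
  by_cases hd : T.Descend x y
  · exact Or.inl (exists_inSub_of_descend hd hxy.ne)
  · exact Or.inr (leftOf_total ⟨hx, by omega⟩ ⟨by omega, hy⟩ hd fun h => absurd h.le (by omega))

lemma card_of_inSub (h : T.InSub y j x) : T.card y x = j := by
  rw [card, dif_pos ⟨j, h⟩]
  exact inSub_unique (Exists.choose_spec (⟨j, h⟩ : ∃ j, T.InSub y j x)) h

lemma card_of_leftOf (h : T.LeftOf x y) : T.card y x = 0 := by
  have hy := h.right_bounds.1
  rw [card, dif_neg fun ⟨j, hj⟩ => (hj.descend hy).not_leftOf h, if_neg fun hc => hc.2.2.2 h]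

lemma card_of_rightOf (hxy : x < y) (h : T.LeftOf y x) : T.card y x = s y := by
  have hy := h.left_bounds
  rw [card, dif_neg fun ⟨j, hj⟩ => (hj.descend hy.1).not_rightOf h,
    if_pos ⟨h.right_bounds.1, hxy, hy.2, fun h' => leftOf_asymm h h'⟩]

lemma bounds_of_card_ne_zero (h : T.card y x ≠ 0) : 1 ≤ x ∧ x < y ∧ y ≤ n := by
  by_cases hi : ∃ j, T.InSub y j x
  · obtain ⟨j, hj⟩ := hi
    rw [card_of_inSub hj] at h
    have hy := hj.one_le h
    exact ⟨(hj.descend hy).left_bounds.1, hj.lt hy, (hj.descend hy).right_bounds.2⟩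
  · rw [card, dif_neg hi] at h
    split_ifs at h with hc
    · exact ⟨hc.1, hc.2.1, hc.2.2.1⟩
    · exact absurd rfl h

lemma card_eq_zero_of_lt (h : n < y) : T.card y x = 0 := by
  by_contra hc
  have := (bounds_of_card_ne_zero hc).2.2
  omega

lemma card_le_s : T.card y x ≤ s y := by
  rw [card]
  split_ifs with hi
  · exact hi.choose_spec.idx_le
  · exact le_rfl
  · exact Nat.zero_le _

lemma inv_cases (h : T.card y x ≠ 0) : (∃ j, j ≠ 0 ∧ T.InSub y j x) ∨ T.LeftOf y x := by
  obtain ⟨hx, hxy, hy⟩ := bounds_of_card_ne_zero h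
  rcases position_cases hx hxy hy with ⟨j, hj⟩ | hl | hr
  · exact Or.inl ⟨j, card_of_inSub hj ▸ h, hj⟩
  · exact absurd (card_of_leftOf hl) h
  · exact Or.inr hr

lemma card_eq_of_descend (hd : T.Descend u v) (hvw : v < w) : T.card w u = T.card w v := by
  obtain hw | hw := le_or_gt w n
  · rcases position_cases hd.right_bounds.1 hvw hw with ⟨j, hj⟩ | hl | hr
    · rw [card_of_inSub hj, card_of_inSub (hj.of_descend hd)]
    · rw [card_of_leftOf hl, card_of_leftOf (hl.descendant_left hd)]
    · rw [card_of_rightOf hvw hr, card_of_rightOf (hd.le.trans_lt hvw) (hr.descendant_right hd)]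
  · rw [card_eq_zero_of_lt hw, card_eq_zero_of_lt hw]

lemma card_le_card_of_leftOf (h : T.LeftOf u v) (huw : u < w) (hvw : v < w) :
    T.card w u ≤ T.card w v := by
  obtain hw | hw := le_or_gt w n
  · rcases position_cases h.right_bounds.1 hvw hw with ⟨j, hj⟩ | hl | hr
    · rw [card_of_inSub hj]
      rcases position_cases h.left_bounds.1 huw hw with ⟨i, hi⟩ | hl' | hr'
      · rw [card_of_inSub hi]
        by_contra hji
        exact leftOf_asymm h ⟨w, j, i, by omega, hj, hi⟩
      · rw [card_of_leftOf hl']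
        exact Nat.zero_le j
      · exact absurd (leftOf_trans hr' h) (hj.descend (by omega)).not_rightOf
    · rw [card_of_leftOf (leftOf_trans h hl)]
      exact Nat.zero_le _
    · rw [card_of_rightOf hvw hr]
      exact card_le_s
  · rw [card_eq_zero_of_lt hw]
    exact Nat.zero_le _

lemma card_trans (hvw : v < w) (hvu : T.card v u ≠ 0) : T.card w v ≤ T.card w u := by
  rcases inv_cases hvu with ⟨j, hj, hu⟩ | h
  · exact (card_eq_of_descend (hu.descend (hu.one_le hj)) hvw).ge
  · exact card_le_card_of_leftOf h hvw ((bounds_of_card_ne_zero hvu).2.1.trans hvw)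

lemma InSubMinus0.descend (h : T.InSubMinus0 a x) (ha : 1 ≤ a) (ha' : a ≤ n) :
    T.Descend x a := by
  rcases h with rfl | ⟨j, -, hj⟩
  · exact descend_refl ha ha'
  · exact hj.descend ha

lemma InSubMinus0.of_inSub (h : T.InSubMinus0 a v) (hu : T.InSub v j u) (hj : j ≠ 0) :
    T.InSubMinus0 a u := by
  rcases h with rfl | ⟨j', hj', hv⟩
  · exact Or.inr ⟨j, Nat.pos_of_ne_zero hj, hu⟩
  · exact Or.inr ⟨j', hj', hv.of_descend (hu.descend (hu.one_le hj))⟩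

lemma InSubMinus0.of_leftOf (h : T.InSubMinus0 a v) (hvu : T.LeftOf v u) (hu : T.Descend u a) :
    T.InSubMinus0 a u := by
  have ha := hu.right_bounds
  obtain rfl | hne := eq_or_ne u a
  · exact absurd hvu (h.descend ha.1 ha.2).not_leftOf
  obtain ⟨q, hq⟩ := exists_inSub_of_descend hu hne
  rcases h with rfl | ⟨j', hj', hv⟩
  · exact absurd hvu hu.not_rightOf
  · refine Or.inr ⟨q, Nat.pos_of_ne_zero fun hq0 => leftOf_asymm hvu ?_, hq⟩
    exact ⟨a, q, j', by omega, hq, hv⟩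

namespace TreeAscent

lemma lt (asc : T.TreeAscent a b) : a < b := asc.2.1

lemma inSub_card (asc : T.TreeAscent a b) : T.InSub b (T.card b a) a := by
  obtain ⟨-, -, -, ⟨i, -, hi⟩, -⟩ := asc
  rwa [card_of_inSub hi]

lemma card_lt_s (asc : T.TreeAscent a b) : T.card b a < s b := by
  obtain ⟨-, -, -, ⟨i, his, hi⟩, -⟩ := asc
  rwa [card_of_inSub hi]

lemma descend (asc : T.TreeAscent a b) : T.Descend a b :=
  asc.inSub_card.descend (by have := asc.1; have := asc.lt; omega)

lemma descend_minus0 (asc : T.TreeAscent a b) (h : T.InSubMinus0 a x) : T.Descend x a :=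
  h.descend asc.1 (by have := asc.2.2.1; have := asc.lt; omega)

lemma card_minus0 (asc : T.TreeAscent a b) (h : T.InSubMinus0 a x) :
    T.card b x = T.card b a :=
  card_eq_of_descend (asc.descend_minus0 h) asc.lt

/-- By condition (ii), the vertex separating `a` from `u` is `b` or lies above `b`. -/
lemma card_lt_of_leftOf (asc : T.TreeAscent a b) (h : T.LeftOf a u) (hub : u < b) :
    T.card b a < T.card b u := by
  obtain ⟨z, m₁, m₂, hm, ha, hu⟩ := h
  have hz := hu.one_le (by omega)
  have hab := asc.descend
  have hbs := asc.card_lt_s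
  obtain ⟨-, -, -, -, hright, -⟩ := asc
  obtain rfl | hzb := eq_or_ne z b
  · rw [card_of_inSub ha, card_of_inSub hu]
    exact hm
  rcases descend_total (ha.descend hz) hab with hd | hd
  · have := hright z m₁ (ha.lt hz) (lt_of_le_of_ne hd.le hzb) ha
    have := hu.idx_le
    omega
  · rw [card_of_rightOf hub ⟨z, m₁, m₂, hm, ha.to_ancestor hab hd hzb.symm, hu⟩]
    exact hbs

lemma card_lt_of_inv (asc : T.TreeAscent a b) (hv : T.InSubMinus0 a v)
    (hu : ¬ T.InSubMinus0 a u) (hvu : T.card v u ≠ 0) : T.card b a < T.card b u := by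
  rcases inv_cases hvu with ⟨j, hj, hsub⟩ | h
  · exact absurd (hv.of_inSub hsub hj) hu
  · have hua : ¬ T.Descend u a := fun hd => hu (hv.of_leftOf h hd)
    have := (bounds_of_card_ne_zero hvu).2.1
    have := (asc.descend_minus0 hv).le
    have := asc.lt
    exact asc.card_lt_of_leftOf (h.ancestor_left (asc.descend_minus0 hv) hua) (by omega)

end TreeAscent

lemma card_le_of_inv_of_descend (hu : T.Descend u a) (hab : a < b) (hvb : v < b)
    (hvu : T.card v u ≠ 0) : T.card b v ≤ T.card b a := by
  by_cases hva : T.Descend v a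
  · exact (card_eq_of_descend hva hab).le
  rcases inv_cases hvu with ⟨j, hj, hsub⟩ | h
  · have hav := (descend_total hu (hsub.descend (hsub.one_le hj))).resolve_right hva
    exact (card_eq_of_descend hav hvb).ge
  · exact card_le_card_of_leftOf (h.ancestor_right hu hva) hvb hab

/-- A transitive multi-inversion set containing `inv T + (b,a)`: row `b` of `inv T` raised by
one on `T^a∖0`. -/
noncomputable def rotInv (T : SDecTree n s) (a b : ℕ) : ℕ → ℕ → ℕ := fun y x =>
  if y = b ∧ T.InSubMinus0 a x then T.card y x + 1 else T.card y x

lemma addInv_le_rotInv (y x : ℕ) : addInv s T.card b a y x ≤ rotInv T a b y x := by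
  unfold addInv rotInv
  by_cases h : y = b ∧ x = a
  · obtain ⟨rfl, rfl⟩ := h
    simp [InSubMinus0]
  · rw [if_neg h]
    split_ifs <;> omega

lemma TreeAscent.isTransitiveInv_rotInv (asc : T.TreeAscent a b) :
    IsTransitiveInv (rotInv T a b) := by
  intro u v w _ hvw
  rcases eq_or_ne (rotInv T a b v u) 0 with h0 | h0
  · exact Or.inl h0
  right
  obtain rfl | hwb := eq_or_ne w b
  · have hvu : T.card v u ≠ 0 := by simpa [rotInv, hvw.ne] using h0
    simp only [rotInv, true_and]
    split_ifs with hv hu hu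
    · rw [asc.card_minus0 hv, asc.card_minus0 hu]
    · rw [asc.card_minus0 hv]
      exact asc.card_lt_of_inv hv hu hvu
    · rw [asc.card_minus0 hu]
      have := card_le_of_inv_of_descend (asc.descend_minus0 hu) asc.lt hvw hvu
      omega
    · exact card_trans hvw hvu
  · simp only [rotInv, hwb, false_and, if_false]
    by_cases hvb : v = b ∧ T.InSubMinus0 a u
    · obtain ⟨rfl, hu⟩ := hvb
      exact (card_eq_of_descend ((asc.descend_minus0 hu).trans asc.descend) hvw).ge
    · rw [rotInv, if_neg hvb] at h0
      exact card_trans hvw h0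

lemma IsRotation.aset_subset (hZ : T.IsRotation Z a b) :
    T.Aset Z ⊆ {p | p.1 = b ∧ T.InSubMinus0 a p.2} := by
  rintro ⟨y, x⟩ (hp : T.card y x < Z.card y x)
  obtain ⟨hx, hxy, hy⟩ := bounds_of_card_ne_zero (T := Z) (y := y) (x := x) (by omega)
  have hle := tcInv_le hZ.1.isTransitiveInv_rotInv addInv_le_rotInv y x
  rw [hZ.2 y x hx hxy hy] at hp
  show y = b ∧ T.InSubMinus0 a x
  by_contra hc
  rw [rotInv, if_neg hc] at hle
  omega

lemma TreeAscent.not_inSubMinus0 (asc₁ : T.TreeAscent a b) (asc₂ : T.TreeAscent c d)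
    (hac : a < c) (hcb : c < b) (ha : T.InSubMinus0 a x) : ¬ T.InSubMinus0 c x := by
  have hxa := asc₁.descend_minus0 ha
  rintro (rfl | ⟨j, hj, hc⟩)
  · exact absurd hxa.le (by omega)
  have hac' := (descend_total hxa (hc.descend (hc.one_le hj.ne'))).resolve_right
    fun h => absurd h.le (by omega)
  have hca := hc.to_ancestor hxa hac' (by omega)
  obtain ⟨-, -, -, -, hright, -⟩ := asc₁
  obtain ⟨-, -, -, -, -, hleaf⟩ := asc₂
  obtain rfl : j = s c := hright c j hac hcb hca
  exact hleaf hj a hca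

lemma not_inSubMinus0_of_inSub_zero (hac : a < c) (h0 : T.InSub c 0 a)
    (ha : T.InSubMinus0 a x) : ¬ T.InSubMinus0 c x := by
  have hxa := ha.descend h0.left_bounds.1 h0.left_bounds.2
  rintro (rfl | ⟨j, hj, hc⟩)
  · exact absurd hxa.le (by omega)
  · exact hj.ne' (inSub_unique hc (h0.of_descend hxa))

end SDecTree

/-- the sets `A_T(a,b)`, `A_T(c,d)` and `F_T(a,c)` are pairwise disjoint,
for tree ascents `(a,b)` and `(c,d)` of `T` with `a < c`. -/
theorem no_common_inversions_added (n : ℕ) (s : ℕ → ℕ) (T Z Q : SDecTree n s)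
    (a b c d : ℕ) (hac : a < c)
    (hZ : SDecTree.IsRotation T Z a b) (hQ : SDecTree.IsRotation T Q c d) :
    Disjoint (SDecTree.Aset T Z) (SDecTree.Aset T Q) ∧
    Disjoint (SDecTree.Aset T Z) (SDecTree.Fset T a b c d) ∧
    Disjoint (SDecTree.Aset T Q) (SDecTree.Fset T a b c d) := by
  have hcd : c < d := hQ.1.lt
  refine ⟨Set.disjoint_left.2 ?_, Set.disjoint_left.2 ?_, Set.disjoint_left.2 ?_⟩
  · intro p hpZ hpQ
    obtain ⟨hpb, hpa⟩ := hZ.aset_subset hpZ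
    obtain ⟨hpd, hpc⟩ := hQ.aset_subset hpQ
    exact hZ.1.not_inSubMinus0 hQ.1 hac (by omega) hpa hpc
  · rintro p hpZ ⟨hbc, -, hpd, -⟩
    have hpb := (hZ.aset_subset hpZ).1
    omega
  · rintro p hpQ ⟨-, h0, -, hpa⟩
    exact SDecTree.not_inSubMinus0_of_inSub_zero hac h0 hpa (hQ.aset_subset hpQ).2
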